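/- Let {y_t} be a real-valued sequence satisfying y_{t+1} = (1 − α_t) y_t + α_t ε_t for all t, where α_t ∈ [0,1] for all t, ∑_{t≥0} α_t = ∞, and ε_t → 0 as t → ∞. Then y_t → 0 as t → ∞. -/

import Mathlib

/-!
Once `|ε t| ≤ δ` for `t ≥ N`, the excess `|y t| - δ` contracts by the factor `1 - α t` at each
step, so it is bounded by `∏_{N ≤ s < t} (1 - α s) · (|y N| - δ)`. Since `1 - a ≤ exp (-a)`,
the product is at most `exp (-∑_{N ≤ s < t} α s)`, which tends to `0` because `∑ α` diverges.
Hence `|y t| < 2δ` eventually.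
-/

open Filter Finset Topology

theorem prod_one_sub_le_exp_neg_sum {ι : Type*} (s : Finset ι) {a : ι → ℝ}
    (ha : ∀ i ∈ s, a i ≤ 1) : ∏ i ∈ s, (1 - a i) ≤ Real.exp (-∑ i ∈ s, a i) := by
  rw [← sum_neg_distrib, Real.exp_sum]
  exact prod_le_prod (fun i hi => sub_nonneg.2 (ha i hi)) fun i _ => Real.one_sub_le_exp_neg _

theorem tendsto_sum_Ico_atTop_of_tendsto_sum_range {a : ℕ → ℝ}
    (h : Tendsto (fun n => ∑ i ∈ range n, a i) atTop atTop) (m : ℕ) :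
    Tendsto (fun n => ∑ i ∈ Ico m n, a i) atTop atTop := by
  refine (tendsto_atTop_add_const_right atTop (-∑ i ∈ range m, a i) h).congr' ?_
  filter_upwards [eventually_ge_atTop m] with n hn
  rw [sum_Ico_eq_sub _ hn, sub_eq_add_neg]

theorem tendsto_prod_Ico_one_sub_zero {a : ℕ → ℝ} (ha : ∀ i, a i ≤ 1)
    (h : Tendsto (fun n => ∑ i ∈ range n, a i) atTop atTop) (m : ℕ) :
    Tendsto (fun n => ∏ i ∈ Ico m n, (1 - a i)) atTop (𝓝 0) := by
  have hexp : Tendsto (fun n => Real.exp (-∑ i ∈ Ico m n, a i)) atTop (𝓝 0) :=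
    Real.tendsto_exp_atBot.comp
      (tendsto_neg_atTop_atBot.comp (tendsto_sum_Ico_atTop_of_tendsto_sum_range h m))
  exact squeeze_zero (fun n => prod_nonneg fun i _ => sub_nonneg.2 (ha i))
    (fun n => prod_one_sub_le_exp_neg_sum _ fun i _ => ha i) hexp

theorem le_prod_Ico_mul_of_le_mul {R : Type*} [CommSemiring R] [PartialOrder R]
    [IsOrderedRing R] {z c : ℕ → R} {m : ℕ} (hc : ∀ n, m ≤ n → 0 ≤ c n)
    (hz : ∀ n, m ≤ n → z (n + 1) ≤ c n * z n) {n : ℕ} (hn : m ≤ n) :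
    z n ≤ (∏ i ∈ Ico m n, c i) * z m := by
  induction n, hn using Nat.le_induction with
  | base => simp
  | succ n hn ih =>
    calc z (n + 1) ≤ c n * z n := hz n hn
      _ ≤ c n * ((∏ i ∈ Ico m n, c i) * z m) := mul_le_mul_of_nonneg_left ih (hc n hn)
      _ = (∏ i ∈ Ico m (n + 1), c i) * z m := by rw [prod_Ico_succ_top hn]; ring

theorem abs_one_sub_mul_add_mul_sub_le {a x e δ : ℝ} (ha : a ∈ Set.Icc (0 : ℝ) 1)
    (he : |e| ≤ δ) : |(1 - a) * x + a * e| - δ ≤ (1 - a) * (|x| - δ) := by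
  have h1a : 0 ≤ 1 - a := sub_nonneg.2 ha.2
  calc |(1 - a) * x + a * e| - δ ≤ (1 - a) * |x| + a * |e| - δ := by
        grw [abs_add_le, abs_mul, abs_mul, abs_of_nonneg h1a, abs_of_nonneg ha.1]
    _ ≤ (1 - a) * |x| + a * δ - δ := by grw [he]; exact ha.1
    _ = (1 - a) * (|x| - δ) := by ring

/-- If `y_{t+1} = (1 − α_t) y_t + α_t ε_t` with `α_t ∈ [0,1]`,
`∑ α_t = ∞`, and `ε_t → 0`, then `y_t → 0`. -/
theorem tendsto_zero_of_recursion (y α ε : ℕ → ℝ)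
    (hα : ∀ t, α t ∈ Set.Icc (0 : ℝ) 1)
    (hαdiv : Tendsto (fun T => ∑ t ∈ Finset.range T, α t) atTop atTop)
    (hrec : ∀ t, y (t + 1) = (1 - α t) * y t + α t * ε t)
    (hε : Tendsto ε atTop (nhds 0)) :
    Tendsto y atTop (nhds 0) := by
  rw [Metric.tendsto_nhds]
  intro r hr
  obtain ⟨N, hN⟩ := Metric.tendsto_atTop.1 hε (r / 2) (half_pos hr)
  have hcontract : ∀ t, N ≤ t → |y (t + 1)| - r / 2 ≤ (1 - α t) * (|y t| - r / 2) :=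
    fun t ht => hrec t ▸ abs_one_sub_mul_add_mul_sub_le (hα t) (by simpa using (hN t ht).le)
  have hprod := (tendsto_prod_Ico_one_sub_zero (fun t => (hα t).2) hαdiv N).mul_const
    (|y N| - r / 2)
  rw [zero_mul] at hprod
  filter_upwards [eventually_ge_atTop N, hprod.eventually (gt_mem_nhds (half_pos hr))]
    with t hNt hsmall
  have hbound := le_prod_Ico_mul_of_le_mul (z := fun t => |y t| - r / 2)
    (fun s _ => sub_nonneg.2 (hα s).2) hcontract hNt
  rw [Real.dist_eq, sub_zero]
  linarith
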